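/- Let H₁ and H₂ be complex Hilbert spaces, J : H₁ → H₂ a linear isometry, (P_t)_{t ≥ 0} a strongly continuous contraction semigroup on H₂ with generator A, and (Q_t)_{t ≥ 0} a strongly continuous contraction semigroup on H₁ with generator B. Assume: (i) P_t maps the range of J into the range of J for every t ≥ 0; (ii) for every x ∈ H₁, x belongs to the domain D(B) if and only if J x belongs to the domain D(A); and (iii) A(J x) = J(B x) for every x ∈ D(B). Then P_t(J x) = J(Q_t x) for every x ∈ H₁ and every t ≥ 0. -/

import Mathlib

open Filter Topology

/-- A strongly continuous contraction semigroup on a complex Hilbert space `H`. -/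
def IsContractionSemigroup {H : Type*} [NormedAddCommGroup H] [InnerProductSpace ℂ H]
    (T : ℝ → H →L[ℂ] H) : Prop :=
  T 0 = ContinuousLinearMap.id ℂ H ∧
  (∀ s t : ℝ, 0 ≤ s → 0 ≤ t → T (s + t) = (T s).comp (T t)) ∧
  (∀ t : ℝ, 0 ≤ t → ‖T t‖ ≤ 1) ∧
  (∀ x : H, ContinuousOn (fun t => T t x) (Set.Ici (0 : ℝ)))

/-- `y` is the value of the generator of the semigroup `T` at `x`. -/
def HasGeneratorAt {H : Type*} [NormedAddCommGroup H] [InnerProductSpace ℂ H]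
    (T : ℝ → H →L[ℂ] H) (x y : H) : Prop :=
  Tendsto (fun t : ℝ => t⁻¹ • (T t x - x)) (𝓝[>] (0 : ℝ)) (𝓝 y)

/-- The domain of the generator of the semigroup `T`. -/
def generatorDomain {H : Type*} [NormedAddCommGroup H] [InnerProductSpace ℂ H]
    (T : ℝ → H →L[ℂ] H) : Set H :=
  {x | ∃ y, HasGeneratorAt T x y}

open Set MeasureTheory

section Aux

variable {H : Type*} [NormedAddCommGroup H] [InnerProductSpace ℂ H]
variable {T : ℝ → H →L[ℂ] H}

lemma IsContractionSemigroup.comp_apply (hT : IsContractionSemigroup T)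
    {s t : ℝ} (hs : 0 ≤ s) (ht : 0 ≤ t) (x : H) :
    T s (T t x) = T (s + t) x := by
  rw [hT.2.1 s t hs ht]; rfl

lemma IsContractionSemigroup.norm_le (hT : IsContractionSemigroup T)
    {t : ℝ} (ht : 0 ≤ t) (x : H) : ‖T t x‖ ≤ ‖x‖ := by
  calc ‖T t x‖ ≤ ‖T t‖ * ‖x‖ := (T t).le_opNorm x
  _ ≤ 1 * ‖x‖ := mul_le_mul_of_nonneg_right (hT.2.2.1 t ht) (norm_nonneg x)
  _ = ‖x‖ := one_mul _

lemma HasGeneratorAt.shift (hT : IsContractionSemigroup T) {x y : H}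
    (hxy : HasGeneratorAt T x y) {s : ℝ} (hs : 0 ≤ s) :
    HasGeneratorAt T (T s x) (T s y) := by
  have key : ∀ᶠ t in 𝓝[>] (0:ℝ),
      T s (t⁻¹ • (T t x - x)) = t⁻¹ • (T t (T s x) - T s x) := by
    filter_upwards [self_mem_nhdsWithin] with t ht
    have h1 : T t (T s x) = T s (T t x) := by
      rw [hT.comp_apply (le_of_lt ht) hs, hT.comp_apply hs (le_of_lt ht), add_comm]
    rw [(T s).map_smul_of_tower, map_sub, h1]
  exact (((T s).continuous.tendsto y).comp hxy).congr' key

end Aux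

section Dense

variable {H : Type*} [NormedAddCommGroup H] [InnerProductSpace ℂ H]
variable {T : ℝ → H →L[ℂ] H}

lemma tendsto_add_nhdsWithin (b : ℝ) :
    Tendsto (fun h : ℝ => b + h) (𝓝[>] (0:ℝ)) (𝓝[>] b) := by
  rw [tendsto_nhdsWithin_iff]
  constructor
  · have : Tendsto (fun h : ℝ => b + h) (𝓝 (0:ℝ)) (𝓝 (b + 0)) :=
      (continuous_const.add continuous_id).tendsto 0
    simpa using this.mono_left nhdsWithin_le_nhds
  · filter_upwards [self_mem_nhdsWithin] with h hh
    exact lt_add_of_pos_right b hh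

lemma hasDerivWithinAt_slope_right {F : ℝ → H} {b : ℝ} {c : H}
    (h : HasDerivWithinAt F c (Ici b) b) :
    Tendsto (fun h : ℝ => h⁻¹ • (F (b + h) - F b)) (𝓝[>] 0) (𝓝 c) := by
  rw [hasDerivWithinAt_iff_tendsto_slope, Set.Ici_sdiff_left] at h
  refine (h.comp (tendsto_add_nhdsWithin b)).congr fun h => ?_
  simp [slope, vsub_eq_sub, Function.comp]

lemma dense_generatorDomain [CompleteSpace H] (hT : IsContractionSemigroup T) :
    Dense (generatorDomain T) := by
  intro x
  set f : ℝ → H := fun s => T s x with hfdef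
  have hf_cont : ContinuousOn f (Ici 0) := hT.2.2.2 x
  set F : ℝ → H := fun u => ∫ s in (0:ℝ)..u, f s with hFdef
  have hint : ∀ a b : ℝ, 0 ≤ a → 0 ≤ b → IntervalIntegrable f volume a b := by
    intro a b ha hb
    apply (hf_cont.mono ?_).intervalIntegrable
    rw [uIcc_eq_union]
    exact union_subset (Icc_subset_Ici_self.trans (by intro t ht; exact le_trans ha ht))
      (Icc_subset_Ici_self.trans (by intro t ht; exact le_trans hb ht))
  have hderiv : ∀ b : ℝ, 0 ≤ b →
      Tendsto (fun h : ℝ => h⁻¹ • (F (b + h) - F b)) (𝓝[>] 0) (𝓝 (f b)) := by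
    intro b hb
    refine hasDerivWithinAt_slope_right ?_
    have hsub : Ioi b ⊆ Ici (0:ℝ) := fun t ht => le_of_lt (lt_of_le_of_lt hb ht)
    have hmeas : StronglyMeasurableAtFilter f (𝓝[>] b) volume :=
      (hf_cont.mono hsub).stronglyMeasurableAtFilter_nhdsWithin measurableSet_Ioi b
    have hcont : ContinuousWithinAt f (Ioi b) b :=
      (hf_cont b (mem_Ici.2 hb)).mono hsub
    exact intervalIntegral.integral_hasDerivWithinAt_right (hint 0 b le_rfl hb) hmeas hcont
  have hF0 : F 0 = 0 := intervalIntegral.integral_same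
  have hfz : f 0 = x := by
    show T 0 x = x
    rw [hT.1]; rfl
  have hmem : ∀ ε : ℝ, 0 < ε → (ε⁻¹ • F ε) ∈ generatorDomain T := by
    intro ε hε
    refine ⟨ε⁻¹ • (f ε - f 0), ?_⟩
    have heq : ∀ᶠ h in 𝓝[>] (0:ℝ),
        ε⁻¹ • (h⁻¹ • (F (ε + h) - F ε) - h⁻¹ • (F (0 + h) - F 0))
          = h⁻¹ • (T h (ε⁻¹ • F ε) - ε⁻¹ • F ε) := by
      filter_upwards [self_mem_nhdsWithin] with h hh
      have hh0 : (0:ℝ) < h := hh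
      have e1 : T h (F ε) = ∫ s in (0:ℝ)..ε, T h (f s) :=
        ((T h).intervalIntegral_comp_comm (hint 0 ε le_rfl hε.le)).symm
      have e2 : (∫ s in (0:ℝ)..ε, T h (f s)) = ∫ s in (0:ℝ)..ε, f (h + s) := by
        apply intervalIntegral.integral_congr
        intro s hs
        rw [uIcc_of_le hε.le] at hs
        exact hT.comp_apply hh0.le hs.1 x
      have e3 : (∫ s in (0:ℝ)..ε, f (h + s)) = ∫ s in h..(h+ε), f s := by
        simpa using intervalIntegral.integral_comp_add_left f h
      have e4 : (∫ s in h..(h+ε), f s) = F (h + ε) - F h := by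
        have := intervalIntegral.integral_add_adjacent_intervals
          (hint 0 h le_rfl hh0.le) (hint h (h+ε) hh0.le (by positivity))
        exact eq_sub_of_add_eq' this
      have e5 : T h (F ε) = F (h + ε) - F h := by rw [e1, e2, e3, e4]
      rw [(T h).map_smul_of_tower, e5, hF0, zero_add, add_comm ε h]
      module
    refine Tendsto.congr' heq ?_
    have l1 := hderiv ε hε.le
    have l2 := hderiv 0 le_rfl
    have := (l1.sub l2).const_smul (ε⁻¹)
    simpa using this
  have htend : Tendsto (fun ε : ℝ => ε⁻¹ • F ε) (𝓝[>] 0) (𝓝 x) := by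
    have := hderiv 0 le_rfl
    rw [hfz] at this
    refine this.congr fun ε => ?_
    rw [zero_add, hF0, sub_zero]
  refine mem_closure_of_tendsto htend ?_
  filter_upwards [self_mem_nhdsWithin] with ε hε
  exact hmem ε hε

end Dense


/-- **Intertwining of semigroups along an isometry.** If `J : H₁ → H₂` is a linear
isometry, `(P t)` a strongly continuous contraction semigroup on `H₂` with generator `A`,
`(Q t)` a strongly continuous contraction semigroup on `H₁` with generator `B`, such that
(i) each `P t` (`t ≥ 0`) preserves the range of `J`, (ii) `x ∈ D(B) ↔ J x ∈ D(A)`,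
and (iii) `A (J x) = J (B x)` on `D(B)`, then `P t (J x) = J (Q t x)` for all `x` and
all `t ≥ 0`. -/
theorem contraction_semigroup_intertwining
    {H₁ H₂ : Type*} [NormedAddCommGroup H₁] [InnerProductSpace ℂ H₁] [CompleteSpace H₁]
    [NormedAddCommGroup H₂] [InnerProductSpace ℂ H₂] [CompleteSpace H₂]
    (J : H₁ →ₗᵢ[ℂ] H₂)
    (P : ℝ → H₂ →L[ℂ] H₂) (hP : IsContractionSemigroup P)
    (Q : ℝ → H₁ →L[ℂ] H₁) (hQ : IsContractionSemigroup Q)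
    (hinv : ∀ t : ℝ, 0 ≤ t → ∀ y ∈ Set.range J, P t y ∈ Set.range J)
    (hdom : ∀ x : H₁, x ∈ generatorDomain Q ↔ J x ∈ generatorDomain P)
    (hval : ∀ x ∈ generatorDomain Q, ∀ y : H₁,
      HasGeneratorAt Q x y → HasGeneratorAt P (J x) (J y)) :
    ∀ t : ℝ, 0 ≤ t → ∀ x : H₁, P t (J x) = J (Q t x) := by
  have step1 : ∀ x ∈ generatorDomain Q, ∀ t : ℝ, 0 ≤ t → P t (J x) = J (Q t x) := by
    rintro x ⟨y, hxy⟩ t ht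
    rcases eq_or_lt_of_le ht with rfl | htpos
    · rw [hP.1, hQ.1]; rfl
    set g : ℝ → H₂ := fun s => J (Q s x) with hgdef
    set f : ℝ → H₂ := fun s => P (t - s) (g s) with hfdef
    have hgc : ContinuousOn g (Icc 0 t) :=
      J.continuous.comp_continuousOn ((hQ.2.2.2 x).mono Icc_subset_Ici_self)
    -- continuity of f on [0, t]
    have hcont : ContinuousOn f (Icc 0 t) := by
      intro s₀ hs₀
      have hPc : ContinuousWithinAt (fun r => P r (g s₀)) (Ici 0) (t - s₀) :=
        hP.2.2.2 (g s₀) (t - s₀) (by simp only [mem_Ici]; linarith [hs₀.2])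
      have hmap : Tendsto (fun s => t - s) (𝓝[Icc 0 t] s₀) (𝓝[Ici 0] (t - s₀)) := by
        rw [tendsto_nhdsWithin_iff]
        constructor
        · exact ((continuous_const.sub continuous_id).tendsto s₀).mono_left nhdsWithin_le_nhds
        · filter_upwards [self_mem_nhdsWithin] with s hs
          simp only [mem_Ici, sub_nonneg]
          exact hs.2
      have h2 : Tendsto (fun s => ‖P (t - s) (g s₀) - P (t - s₀) (g s₀)‖)
          (𝓝[Icc 0 t] s₀) (𝓝 0) := by
        have := hPc.tendsto.comp hmap
        exact tendsto_iff_norm_sub_tendsto_zero.1 this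
      have h1 : Tendsto (fun s => ‖g s - g s₀‖) (𝓝[Icc 0 t] s₀) (𝓝 0) :=
        tendsto_iff_norm_sub_tendsto_zero.1 (hgc s₀ hs₀).tendsto
      have key : Tendsto (fun s => f s - f s₀) (𝓝[Icc 0 t] s₀) (𝓝 0) := by
        refine squeeze_zero_norm' (a := fun s => ‖g s - g s₀‖ + ‖P (t - s) (g s₀) - P (t - s₀) (g s₀)‖) ?_ ?_
        · filter_upwards [self_mem_nhdsWithin] with s hs
          have hts : (0:ℝ) ≤ t - s := by linarith [hs.2]
          have expand : f s - f s₀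
              = P (t - s) (g s - g s₀) + (P (t - s) (g s₀) - P (t - s₀) (g s₀)) := by
            simp only [hfdef, map_sub]
            abel
          calc ‖f s - f s₀‖
              ≤ ‖P (t - s) (g s - g s₀)‖ + ‖P (t - s) (g s₀) - P (t - s₀) (g s₀)‖ := by
                rw [expand]; exact norm_add_le _ _
            _ ≤ ‖g s - g s₀‖ + ‖P (t - s) (g s₀) - P (t - s₀) (g s₀)‖ := by
                have := hP.norm_le hts (g s - g s₀)
                linarith
        · simpa using h1.add h2
      have := key.add (tendsto_const_nhds (x := f s₀))
      simp at this; exact this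
    -- zero right derivative on [0, t)
    have hderiv : ∀ s ∈ Ico 0 t, HasDerivWithinAt f 0 (Ici s) s := by
      intro s hs
      obtain ⟨hs0, hst⟩ := hs
      set u := Q s x with hu
      have huQ : HasGeneratorAt Q u (Q s y) := hxy.shift hQ hs0
      have hPu : HasGeneratorAt P (J u) (J (Q s y)) := hval u ⟨_, huQ⟩ _ huQ
      rw [hasDerivWithinAt_iff_tendsto_slope, Set.Ici_sdiff_left]
      have hmap : Tendsto (fun b : ℝ => b - s) (𝓝[>] s) (𝓝[>] (0:ℝ)) := by
        rw [tendsto_nhdsWithin_iff]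
        constructor
        · have : Tendsto (fun b : ℝ => b - s) (𝓝 s) (𝓝 (s - s)) :=
            (continuous_id.sub continuous_const).tendsto s
          simpa using this.mono_left nhdsWithin_le_nhds
        · filter_upwards [self_mem_nhdsWithin] with b hb
          simpa [sub_pos] using hb
      set G : ℝ → H₂ := fun b => (b - s)⁻¹ • (J (Q (b - s) u) - P (b - s) (J u)) with hGdef
      have hG : Tendsto G (𝓝[>] s) (𝓝 0) := by
        have t1 : Tendsto (fun b : ℝ => (J ((b - s)⁻¹ • (Q (b - s) u - u)) : H₂))
            (𝓝[>] s) (𝓝 (J (Q s y))) :=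
          (J.continuous.tendsto _).comp (huQ.comp hmap)
        have t2 : Tendsto (fun b : ℝ => (b - s)⁻¹ • (P (b - s) (J u) - J u))
            (𝓝[>] s) (𝓝 (J (Q s y))) := hPu.comp hmap
        have := t1.sub t2
        rw [sub_self] at this
        refine this.congr fun b => ?_
        have Jsmul : (J ((b - s)⁻¹ • (Q (b - s) u - u)) : H₂)
            = (b - s)⁻¹ • (J (Q (b - s) u) - J u) := by
          have h := J.toLinearMap.map_smul_of_tower ((b - s)⁻¹) (Q (b - s) u - u)
          simp only [LinearIsometry.coe_toLinearMap, map_sub] at h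
          exact h
        rw [Jsmul]
        simp only [hGdef]
        rw [smul_sub, smul_sub, smul_sub]
        abel
      refine squeeze_zero_norm' (a := fun b => ‖G b‖) ?_ ?_
      · filter_upwards [Ioo_mem_nhdsGT_of_mem ⟨le_refl s, hst⟩] with b hb
        obtain ⟨hsb, hbt⟩ := hb
        have hbs0 : (0:ℝ) ≤ b - s := by linarith
        have htb0 : (0:ℝ) ≤ t - b := by linarith
        have hfb : f b - f s = P (t - b) (J (Q (b - s) u) - P (b - s) (J u)) := by
          have e1 : Q b x = Q (b - s) u := by
            rw [hQ.comp_apply hbs0 hs0, sub_add_cancel]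
          have e2 : P (t - s) (J u) = P (t - b) (P (b - s) (J u)) := by
            rw [hP.comp_apply htb0 hbs0]
            congr 1
            ring
          show P (t - b) (J (Q b x)) - P (t - s) (J (Q s x)) = _
          rw [e1, map_sub]
          congr 1
        have : slope f s b = P (t - b) (G b) := by
          rw [slope_def_module, hfb, hGdef]
          simp only []
          rw [(P (t - b)).map_smul_of_tower]
        rw [this]
        exact hP.norm_le htb0 (G b)
      · simpa using hG.norm
    have hconst := constant_of_has_deriv_right_zero hcont hderiv t (right_mem_Icc.2 ht)
    have hft : f t = J (Q t x) := by
      simp only [hfdef, hgdef, sub_self, hP.1]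
      rfl
    have hf0 : f 0 = P t (J x) := by
      simp only [hfdef, hgdef, sub_zero, hQ.1]
      rfl
    rw [← hft, hconst, hf0]
  intro t ht x
  have hd := dense_generatorDomain hQ
  have hc1 : Continuous (fun z : H₁ => P t (J z)) := (P t).continuous.comp J.continuous
  have hc2 : Continuous (fun z : H₁ => (J (Q t z) : H₂)) := J.continuous.comp (Q t).continuous
  have := Continuous.ext_on hd hc1 hc2 (fun z hz => step1 z hz t ht)
  exact congrFun this x
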